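/- Let (c_1,…,c_n) be a sequence in Z_α with c_n = 0, c_1 ≠ 0, and c_i ≠ c_{i+1} for all i. Then W((c_1,…,c_n), 0) = W((c_1,…,c_n), c_1): the hand rotating counterclockwise from c_1 through c_2,…,c_n passes or lands on position 0 the same number of times it passes or lands on position c_1. -/

import Mathlib

open Finset Polynomial

/-- The `i`-th position (0-indexed) among the first `n-1` positions, as an element of `Fin n`. -/
def lo (n : ℕ) (i : Fin (n - 1)) : Fin n := ⟨i.val, by have := i.isLt; omega⟩

/-- The `(i+1)`-st position, as an element of `Fin n`. -/
def hi (n : ℕ) (i : Fin (n - 1)) : Fin n := ⟨i.val + 1, by have := i.isLt; omega⟩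

/-- The colored descent number `d(w)` of a colored permutation, given by the underlying
permutation `w` and the color vector `c`. -/
def cdes {n α : ℕ} (w : Equiv.Perm (Fin n)) (c : Fin n → ZMod α) : ℕ :=
  (univ.filter (fun i : Fin (n - 1) =>
    c (lo n i) ≠ c (hi n i) ∨ (c (lo n i) = c (hi n i) ∧ w (hi n i) < w (lo n i)))).card

/-- The flag descent statistic of a colored permutation. -/
def flagStat {n α : ℕ} (w : Equiv.Perm (Fin n)) (c : Fin n → ZMod α) : ℕ :=
  α * (univ.filter (fun i : Fin (n - 1) =>
        c (lo n i) = c (hi n i) ∧ w (hi n i) < w (lo n i))).card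
  + α * (univ.filter (fun i : Fin (n - 1) =>
        (c (lo n i)).val < (c (hi n i)).val)).card
  + (if h : 0 < n then (c ⟨0, h⟩).val else 0)

/-- The classical descent number of a permutation. -/
def des {n : ℕ} (w : Equiv.Perm (Fin n)) : ℕ :=
  (univ.filter (fun i : Fin (n - 1) => w (hi n i) < w (lo n i))).card

/-- The reversal of the underlying permutation (in one-line notation). -/
def rPerm {n : ℕ} (w : Equiv.Perm (Fin n)) : Equiv.Perm (Fin n) :=
  (Fin.revPerm : Equiv.Perm (Fin n)).trans w

/-- The reversed color vector with `c 0` subtracted from every color. -/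
def rCol {n α : ℕ} (c : Fin n → ZMod α) : Fin n → ZMod α :=
  fun i => c i.rev - (if h : 0 < n then c ⟨0, h⟩ else 0)

/-- The colored winding number `W(c, j)`: one less than the number of times a clock hand,
starting at `c 0` and rotating counterclockwise through `c 1, c 2, …` (on a clock with
positions `0, 1, …, α-1` written clockwise), is at or passes position `j`.  During the step
from `c_i` to `c_{i+1}` the hand meets `j` exactly when `1 ≤ (c_i - j).val ≤ (c_i - c_{i+1}).val`. -/
def wind {n α : ℕ} (c : Fin n → ZMod α) (j : ZMod α) : ℕ :=
  (if h : 0 < n then (if c ⟨0, h⟩ = j then 1 else 0) else 0)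
  + (univ.filter (fun i : Fin (n - 1) =>
      c (lo n i) ≠ j ∧ (c (lo n i) - j).val ≤ (c (lo n i) - c (hi n i)).val)).card
  - 1

section auxlemmas

lemma step_id (α : ℕ) [NeZero α] (x y j : ZMod α) (hxy : x ≠ y) :
    α * (if x ≠ j ∧ (x - j).val ≤ (x - y).val then 1 else 0)
      + α * (if x = j then 1 else 0) + (x - j).val
    = (x - y).val + α * (if y = j then 1 else 0) + (y - j).val := by
  have hdecomp : x - j = (x - y) + (y - j) := by ring
  have ha : (x - j).val = ((x - y).val + (y - j).val) % α := by
    rw [hdecomp, ZMod.val_add]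
  have hs1 : (x - y).val ≠ 0 := by
    rw [Ne, ZMod.val_eq_zero, sub_eq_zero]; exact hxy
  have hxj : (x = j) ↔ (x - j).val = 0 := by rw [ZMod.val_eq_zero, sub_eq_zero]
  have hyj : (y = j) ↔ (y - j).val = 0 := by rw [ZMod.val_eq_zero, sub_eq_zero]
  have hb : (y - j).val < α := ZMod.val_lt _
  have hsl : (x - y).val < α := ZMod.val_lt _
  simp only [ne_eq, hxj, hyj]
  rcases Nat.lt_or_ge ((x - y).val + (y - j).val) α with h | h
  · rw [Nat.mod_eq_of_lt h] at ha
    split_ifs <;> omega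
  · have h2 : ((x - y).val + (y - j).val) % α = (x - y).val + (y - j).val - α := by
      rw [Nat.mod_eq_sub_mod h, Nat.mod_eq_of_lt (by omega)]
    rw [h2] at ha
    split_ifs <;> omega

lemma shift_sum {n : ℕ} (hn : 0 < n) (f : Fin n → ℕ) :
    (∑ i : Fin (n - 1), f (lo n i)) + f ⟨n - 1, by omega⟩
      = (∑ i : Fin (n - 1), f (hi n i)) + f ⟨0, hn⟩ := by
  set g : ℕ → ℕ := fun m => if h : m < n then f ⟨m, h⟩ else 0 with hg
  have k1 : ∑ i : Fin (n - 1), f (lo n i) = ∑ m ∈ Finset.range (n - 1), g m := by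
    rw [← Fin.sum_univ_eq_sum_range g (n - 1)]
    refine Finset.sum_congr rfl fun i _ => ?_
    have hi' : (i : ℕ) < n := by have := i.isLt; omega
    simp only [hg, dif_pos hi']
    rfl
  have k2 : ∑ i : Fin (n - 1), f (hi n i) = ∑ m ∈ Finset.range (n - 1), g (m + 1) := by
    rw [← Fin.sum_univ_eq_sum_range (fun m => g (m + 1)) (n - 1)]
    refine Finset.sum_congr rfl fun i _ => ?_
    have hi' : (i : ℕ) + 1 < n := by have := i.isLt; omega
    simp only [hg, dif_pos hi']
    rfl
  have r1 : ∑ m ∈ Finset.range ((n - 1) + 1), g m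
      = ∑ m ∈ Finset.range (n - 1), g m + g (n - 1) := Finset.sum_range_succ g (n - 1)
  have r2 : ∑ m ∈ Finset.range ((n - 1) + 1), g m
      = (∑ m ∈ Finset.range (n - 1), g (m + 1)) + g 0 := Finset.sum_range_succ' g (n - 1)
  have v1 : g (n - 1) = f ⟨n - 1, by omega⟩ := by
    simp only [hg, dif_pos (show n - 1 < n by omega)]
  have v2 : g 0 = f ⟨0, hn⟩ := by simp only [hg, dif_pos hn]
  omega

lemma master_eq {n α : ℕ} [NeZero α] (hn : 0 < n) (c : Fin n → ZMod α)
    (hadj : ∀ i : Fin (n - 1), c (lo n i) ≠ c (hi n i)) (j : ZMod α) :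
    α * (univ.filter (fun i : Fin (n - 1) =>
        c (lo n i) ≠ j ∧ (c (lo n i) - j).val ≤ (c (lo n i) - c (hi n i)).val)).card
    + α * (univ.filter (fun i : Fin (n - 1) => c (lo n i) = j)).card
    + (c ⟨0, hn⟩ - j).val
    = (∑ i : Fin (n - 1), (c (lo n i) - c (hi n i)).val)
    + α * (univ.filter (fun i : Fin (n - 1) => c (hi n i) = j)).card
    + (c ⟨n - 1, by omega⟩ - j).val := by
  have hsum : ∑ i : Fin (n - 1),
      (α * (if c (lo n i) ≠ j ∧ (c (lo n i) - j).val ≤ (c (lo n i) - c (hi n i)).val then 1 else 0)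
       + α * (if c (lo n i) = j then 1 else 0) + (c (lo n i) - j).val)
    = ∑ i : Fin (n - 1),
      ((c (lo n i) - c (hi n i)).val + α * (if c (hi n i) = j then 1 else 0)
        + (c (hi n i) - j).val) :=
    Finset.sum_congr rfl fun i _ => step_id α _ _ j (hadj i)
  have hshift := shift_sum hn (fun i => (c i - j).val)
  simp only [Finset.sum_add_distrib, ← Finset.mul_sum] at hsum
  rw [Finset.card_filter, Finset.card_filter, Finset.card_filter]
  linarith [hsum, hshift]

lemma count_shift {n α : ℕ} (hn : 0 < n) (c : Fin n → ZMod α) (j : ZMod α) :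
    (univ.filter (fun i : Fin (n - 1) => c (lo n i) = j)).card
      + (if c ⟨n - 1, by omega⟩ = j then 1 else 0)
    = (univ.filter (fun i : Fin (n - 1) => c (hi n i) = j)).card
      + (if c ⟨0, hn⟩ = j then 1 else 0) := by
  have := shift_sum hn (fun i => if c i = j then 1 else 0)
  rw [Finset.card_filter, Finset.card_filter]
  exact this

end auxlemmas


/-- For a color sequence with `c_1 ≠ 0`, `c_n = 0` and no two adjacent colors equal, the
hand passes or lands on `0` the same number of times it passes or lands on `c_1`:
`W(c, 0) = W(c, c_1)`. -/
theorem wind_zero_eq_wind_first_color (n α : ℕ) (hα : 0 < α) (hn : 0 < n)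
    (c : Fin n → ZMod α) (hlast : c ⟨n - 1, by omega⟩ = 0)
    (hfirst : c ⟨0, hn⟩ ≠ 0)
    (hadj : ∀ i : Fin (n - 1), c (lo n i) ≠ c (hi n i)) :
    wind c 0 = wind c (c ⟨0, hn⟩) := by
  haveI : NeZero α := ⟨hα.ne'⟩
  have hva : (c ⟨0, hn⟩).val < α := ZMod.val_lt _
  have hva0 : (c ⟨0, hn⟩).val ≠ 0 := by
    rw [Ne, ZMod.val_eq_zero]; exact hfirst
  have hm0 := master_eq hn c hadj 0
  have hm1 := master_eq hn c hadj (c ⟨0, hn⟩)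
  have hc0 := count_shift hn c (0 : ZMod α)
  have hc1 := count_shift hn c (c ⟨0, hn⟩)
  rw [hlast] at hm0 hm1 hc0 hc1
  simp only [sub_zero, ZMod.val_zero, if_true, if_neg hfirst, zero_sub,
    sub_self, add_zero] at hm0 hm1 hc0 hc1
  rw [ZMod.neg_val, if_neg hfirst] at hm1
  rw [if_neg (Ne.symm hfirst), add_zero] at hc1
  -- hc0 : Z0 + 1 = E0 ;  hc1 : Z1 = E1 + 1
  have hc0' : α * (univ.filter (fun i : Fin (n - 1) => c (lo n i) = 0)).card + α
      = α * (univ.filter (fun i : Fin (n - 1) => c (hi n i) = 0)).card := by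
    rw [← hc0, Nat.mul_add, Nat.mul_one]
  have hc1' : α * (univ.filter (fun i : Fin (n - 1) => c (lo n i) = c ⟨0, hn⟩)).card
      = α * (univ.filter (fun i : Fin (n - 1) => c (hi n i) = c ⟨0, hn⟩)).card + α := by
    rw [hc1, Nat.mul_add, Nat.mul_one]
  have key : α * (univ.filter (fun i : Fin (n - 1) =>
      c (lo n i) ≠ (0 : ZMod α) ∧ (c (lo n i) - 0).val ≤ (c (lo n i) - c (hi n i)).val)).card
      = α * (univ.filter (fun i : Fin (n - 1) =>
      c (lo n i) ≠ c ⟨0, hn⟩ ∧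
        (c (lo n i) - c ⟨0, hn⟩).val ≤ (c (lo n i) - c (hi n i)).val)).card + α := by
    simp only [sub_zero] at hm0 ⊢
    zify [Nat.le_of_lt hva] at hm0 hm1 hc0' hc1' ⊢
    linarith [hm0, hm1, hc0', hc1']
  have key2 : (univ.filter (fun i : Fin (n - 1) =>
      c (lo n i) ≠ (0 : ZMod α) ∧ (c (lo n i) - 0).val ≤ (c (lo n i) - c (hi n i)).val)).card
      = (univ.filter (fun i : Fin (n - 1) =>
      c (lo n i) ≠ c ⟨0, hn⟩ ∧
        (c (lo n i) - c ⟨0, hn⟩).val ≤ (c (lo n i) - c (hi n i)).val)).card + 1 := by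
    apply Nat.eq_of_mul_eq_mul_left hα
    rw [Nat.mul_add, Nat.mul_one, key]
  simp only [wind, dif_pos hn, if_neg hfirst, if_true]
  omega
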